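/- arXiv:math/0607557 — 6 statements merged into one kernel-verified Lean document; each statement's English description precedes it below -/
import Mathlib

section
/- Let S be a locally simply connected topological space and f : S → S a continuous map. Define two fixed points x, y of f to be Nielsen equivalent if there is a path α from x to y such that f ∘ α is homotopic to α rel endpoints. Then Nielsen equivalence is an equivalence relation on Fix(f) = {x : f(x) = x}, and each Nielsen equivalence class is both open and closed in Fix(f) with the subspace topology. -/
/-!
Nielsen equivalence is an equivalence relation by reversing and concatenating paths together
with their homotopies. Near a fixed point `y` pick a simply connected open `W ∋ y` and a path
connected open `U ∋ y` with `U ∪ f(U) ⊆ W`. For a fixed point `z ∈ U`, a path `α` from `y` to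
`z` in `U` and the path `f ∘ α` have the same endpoints and both run in `W`, so they are
homotopic: `z` is Nielsen equivalent to `y`. Hence every Nielsen class is a neighbourhood of
each of its points in `Fix f`, and classes of an equivalence relation with this property are
clopen.
-/

/-- Two points `x, y` are Nielsen equivalent for `f` if both are fixed and there is a path
`α` from `x` to `y` such that `f ∘ α` (as a path `β`) is homotopic to `α` rel endpoints. -/
def NielsenRel {S : Type*} [TopologicalSpace S] (f : S → S) (x y : S) : Prop :=
  f x = x ∧ f y = y ∧
    ∃ α β : Path x y, (∀ s, β s = f (α s)) ∧ α.Homotopic β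

open Filter Topology

theorem Path.Homotopic.of_forall_mem {X : Type*} [TopologicalSpace X] {W : Set X}
    [SimplyConnectedSpace W] {x y : X} {p q : Path x y} (hp : ∀ t, p t ∈ W)
    (hq : ∀ t, q t ∈ W) : p.Homotopic q := by
  have hx : x ∈ W := by simpa using hp 0
  have hy : y ∈ W := by simpa using hp 1
  let lift (γ : Path x y) (hγ : ∀ t, γ t ∈ W) : Path (⟨x, hx⟩ : W) ⟨y, hy⟩ :=
    { toFun := fun t => ⟨γ t, hγ t⟩
      continuous_toFun := γ.continuous.subtype_mk _
      source' := Subtype.ext γ.source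
      target' := Subtype.ext γ.target }
  exact (SimplyConnectedSpace.paths_homotopic (lift p hp) (lift q hq)).map
    ⟨Subtype.val, continuous_subtype_val⟩

section Nielsen

variable {S : Type*} [TopologicalSpace S] {f : S → S}

theorem nielsenRel_refl {x : S} (hx : f x = x) : NielsenRel f x x :=
  ⟨hx, hx, Path.refl x, Path.refl x, fun _ => hx.symm, Path.Homotopic.refl _⟩

theorem NielsenRel.symm {x y : S} (h : NielsenRel f x y) : NielsenRel f y x := by
  obtain ⟨hx, hy, α, β, hβ, hαβ⟩ := h
  exact ⟨hy, hx, α.symm, β.symm, fun s => hβ _, hαβ.symm₂⟩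

theorem NielsenRel.trans {x y z : S} (h₁ : NielsenRel f x y) (h₂ : NielsenRel f y z) :
    NielsenRel f x z := by
  obtain ⟨hx, -, α₁, β₁, hβ₁, hαβ₁⟩ := h₁
  obtain ⟨-, hz, α₂, β₂, hβ₂, hαβ₂⟩ := h₂
  refine ⟨hx, hz, α₁.trans α₂, β₁.trans β₂, fun s => ?_, hαβ₁.hcomp hαβ₂⟩
  rw [Path.trans_apply, Path.trans_apply]
  split_ifs <;> simp only [hβ₁, hβ₂]

theorem eventually_nielsenRel (hf : Continuous f) {y : S} (hy : f y = y)
    (hS : ∀ N ∈ 𝓝 y, ∃ U ⊆ N, IsOpen U ∧ y ∈ U ∧ SimplyConnectedSpace U) :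
    ∀ᶠ z in 𝓝 y, f z = z → NielsenRel f y z := by
  obtain ⟨W, -, hW, hyW, hWsc⟩ := hS Set.univ univ_mem
  have hN : W ∩ f ⁻¹' W ∈ 𝓝 y :=
    inter_mem (hW.mem_nhds hyW) ((hW.preimage hf).mem_nhds (by rwa [Set.mem_preimage, hy]))
  obtain ⟨U, hUN, hU, hyU, hUsc⟩ := hS _ hN
  filter_upwards [hU.mem_nhds hyU] with z hzU hz
  let α : Path y z := (PathConnectedSpace.somePath (⟨y, hyU⟩ : U) ⟨z, hzU⟩).map
    continuous_subtype_val
  have hαU (t) : α t ∈ U := Subtype.property _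
  let β : Path y z := (α.map hf).cast hy.symm hz.symm
  exact ⟨hy, hz, α, β, fun _ => rfl,
    .of_forall_mem (fun t => (hUN (hαU t)).1) (fun t => (hUN (hαU t)).2)⟩

end Nielsen

theorem isClopen_setOf_of_eventually {X : Type*} [TopologicalSpace X] {r : X → X → Prop}
    (hr : Equivalence r) (h : ∀ y, ∀ᶠ z in 𝓝 y, r y z) (x : X) : IsClopen {y | r x y} := by
  refine ⟨?_, ?_⟩
  · rw [← isOpen_compl_iff, isOpen_iff_eventually]
    intro y hxy
    filter_upwards [h y] with z hyz hxz
    exact hxy (hr.trans hxz (hr.symm hyz))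
  · rw [isOpen_iff_eventually]
    intro y hxy
    filter_upwards [h y] with z hyz
    exact hr.trans hxy hyz

/-- On a locally simply connected space, Nielsen equivalence is an equivalence
relation on `Fix f`, and each Nielsen class is open and closed in `Fix f`. -/
theorem stmt_2 {S : Type*} [TopologicalSpace S]
    (hS : ∀ x : S, ∀ N ∈ nhds x, ∃ U ⊆ N, IsOpen U ∧ x ∈ U ∧ SimplyConnectedSpace U)
    (f : S → S) (hf : Continuous f) :
    Equivalence (fun x y : {z : S // f z = z} => NielsenRel f (x : S) (y : S)) ∧
      ∀ x : {z : S // f z = z},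
        IsOpen {y : {z : S // f z = z} | NielsenRel f (x : S) (y : S)} ∧
        IsClosed {y : {z : S // f z = z} | NielsenRel f (x : S) (y : S)} := by
  have hequiv : Equivalence (fun x y : {z : S // f z = z} => NielsenRel f (x : S) (y : S)) :=
    ⟨fun x => nielsenRel_refl x.2, NielsenRel.symm, NielsenRel.trans⟩
  have hlocal (y : {z : S // f z = z}) : ∀ᶠ z in 𝓝 y, NielsenRel f y.1 z.1 := by
    filter_upwards [(continuous_subtype_val.tendsto y).eventually
      (eventually_nielsenRel hf y.2 (hS y))] with z hz
    exact hz z.2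
  exact ⟨hequiv, fun x => (isClopen_setOf_of_eventually hequiv hlocal x).symm⟩
end

section
/- Let f : ℝ² → ℝ² be a C¹ map (with respect to the Euclidean structure) and let x be a fixed point of f. Then there exists ε₀ > 0 such that for every fixed point y of f with ‖y − x‖ ≤ ε₀ and every point z on the closed straight line segment from x to y, one has ‖f(z) − x‖ ≤ ‖y − x‖. In particular, for every ε ≤ ε₀, if y is a fixed point of f in the ε-ball around x then f maps the segment from x to y into the ε-ball around x. -/
/-!
Let `A = Df(x)` and choose a closed ball around `x` on which `‖Df - A‖ ≤ 1/2`. For a fixed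
point `y` in that ball and `z = (1 - s) x + s y`, write
`f z - x = (f z - f y - A (z - y)) + s (y - x) + (1 - s) (y - x - A (y - x))`.
Since `f y - f x = y - x`, the mean value inequality bounds the first and last terms by
`(1 - s) ‖y - x‖ / 2` each, so `‖f z - x‖ ≤ ‖y - x‖`.
-/

open Metric

theorem Convex.norm_image_segment_sub_fixedPoint_le {E : Type*} [NormedAddCommGroup E]
    [NormedSpace ℝ E] {f : E → E} {S : Set E} {A : E →L[ℝ] E} {c : ℝ} (hS : Convex ℝ S)
    (hf : ∀ z ∈ S, DifferentiableAt ℝ f z) (hbound : ∀ z ∈ S, ‖fderiv ℝ f z - A‖ ≤ c)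
    {x y : E} (hxS : x ∈ S) (hyS : y ∈ S) (hx : f x = x) (hy : f y = y)
    {s : ℝ} (hs : s ∈ Set.Icc (0 : ℝ) 1) :
    ‖f ((1 - s) • x + s • y) - x‖ ≤ (s + 2 * c * (1 - s)) * ‖y - x‖ := by
  obtain ⟨hs0, hs1⟩ := hs
  set z := (1 - s) • x + s • y
  have hzS : z ∈ S := hS hxS hyS (by linarith) hs0 (by ring)
  have hzy : z - y = -((1 - s) • (y - x)) := by module
  have hxy : ‖y - x - A (y - x)‖ ≤ c * ‖y - x‖ := by
    simpa only [hx, hy] using hS.norm_image_sub_le_of_norm_fderiv_le' hf hbound hxS hyS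
  have hyz : ‖f z - f y - A (z - y)‖ ≤ c * ((1 - s) * ‖y - x‖) := by
    have hnorm : ‖z - y‖ = (1 - s) * ‖y - x‖ := by
      rw [hzy, norm_neg, norm_smul, Real.norm_of_nonneg (by linarith)]
    exact hnorm ▸ hS.norm_image_sub_le_of_norm_fderiv_le' hf hbound hyS hzS
  have hdecomp : f z - x =
      (f z - f y - A (z - y)) + s • (y - x) + (1 - s) • (y - x - A (y - x)) := by
    rw [hzy, map_neg, map_smul, hy]
    module
  calc ‖f z - x‖
      ≤ ‖f z - f y - A (z - y)‖ + ‖s • (y - x)‖ + ‖(1 - s) • (y - x - A (y - x))‖ := by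
        rw [hdecomp]; exact norm_add₃_le
    _ = ‖f z - f y - A (z - y)‖ + s * ‖y - x‖ + (1 - s) * ‖y - x - A (y - x)‖ := by
        rw [norm_smul, norm_smul, Real.norm_of_nonneg hs0, Real.norm_of_nonneg (by linarith)]
    _ ≤ c * ((1 - s) * ‖y - x‖) + s * ‖y - x‖ + (1 - s) * (c * ‖y - x‖) := by
        gcongr
    _ = (s + 2 * c * (1 - s)) * ‖y - x‖ := by ring

/-- For a `C¹` map `f` of the Euclidean plane with fixed point `x`, there is
`ε₀ > 0` such that for every fixed point `y` with `‖y - x‖ ≤ ε₀`, `f` maps the straight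
segment from `x` to `y` into the closed ball of radius `‖y - x‖` about `x`; in particular,
for every `ε ≤ ε₀`, if `y` is a fixed point in the `ε`-ball about `x` then `f` maps the
segment from `x` to `y` into that `ε`-ball. -/
theorem stmt_5 (f : EuclideanSpace ℝ (Fin 2) → EuclideanSpace ℝ (Fin 2))
    (hf : ContDiff ℝ 1 f) (x : EuclideanSpace ℝ (Fin 2)) (hx : f x = x) :
    ∃ ε₀ > (0 : ℝ),
      (∀ y, f y = y → ‖y - x‖ ≤ ε₀ →
        ∀ s ∈ Set.Icc (0 : ℝ) 1, ‖f ((1 - s) • x + s • y) - x‖ ≤ ‖y - x‖) ∧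
      (∀ ε, 0 < ε → ε ≤ ε₀ → ∀ y, f y = y → y ∈ Metric.ball x ε →
        ∀ s ∈ Set.Icc (0 : ℝ) 1, f ((1 - s) • x + s • y) ∈ Metric.ball x ε) := by
  have hcont : ContinuousAt (fderiv ℝ f) x := (hf.continuous_fderiv one_ne_zero).continuousAt
  obtain ⟨δ, hδ, hnear⟩ := (nhds_basis_closedBall.tendsto_iff nhds_basis_closedBall).1 hcont
    (1 / 2) one_half_pos
  have hsegment : ∀ y, f y = y → ‖y - x‖ ≤ δ →
      ∀ s ∈ Set.Icc (0 : ℝ) 1, ‖f ((1 - s) • x + s • y) - x‖ ≤ ‖y - x‖ := by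
    intro y hy hyx s hs
    have h := (convex_closedBall x δ).norm_image_segment_sub_fixedPoint_le
      (fun z _ => hf.differentiable one_ne_zero z)
      (fun z hz => by simpa only [mem_closedBall, dist_eq_norm] using hnear z hz)
      (mem_closedBall_self hδ.le) (mem_closedBall_iff_norm.2 hyx) hx hy hs
    rwa [show s + 2 * (1 / 2) * (1 - s) = 1 by ring, one_mul] at h
  refine ⟨δ, hδ, hsegment, fun ε _ hεδ y hy hyε s hs => ?_⟩
  rw [mem_ball_iff_norm] at hyε ⊢
  exact (hsegment y hy (hyε.le.trans hεδ) s hs).trans_lt hyε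
end

section
/- Let f : ℝ² → ℝ² be a C¹ map with f(x) = x, suppose the derivative Df_x has positive determinant, and suppose x is an accumulation point of Fix(f), i.e. x lies in the closure of Fix(f) \ {x}. Then there exists ε > 0 such that for every point p with f(p) ≠ p, ‖p − x‖ < ε, and ‖f(p) − x‖ < ε, the closed straight line segment from p to f(p) contains no fixed point of f. -/
/-!
Because `x` is a non-isolated fixed point, `A = Df_x` has eigenvalue `1`: otherwise `A - 1` is
injective, hence anti-Lipschitz, and `z ↦ f z - z` would not vanish on a punctured neighbourhood of
`x`. In dimension two the other eigenvalue is then `det A > 0`, so `A` has no eigenvalue in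
`(-∞, 0]` and the maps `(1 - s) • 1 + s • A`, `s ∈ [0, 1]`, are injective; by compactness they are
uniformly bounded below by some `c > 0`. If `q = (1 - s) • p + s • f p` were fixed, then with
`g = f p - p` we would have `f q - f p - A (q - p) = -((1 - s) • g + s • A g)`, of norm at least
`c * ‖g‖`, while strict differentiability at `x` bounds it by `c / 2 * ‖q - p‖ ≤ c / 2 * ‖g‖`.
-/

open Set Topology

namespace Module.End

variable {K V : Type*} [Field K] [AddCommGroup V] [Module K V]

theorem det_eq_mul_of_hasEigenvector_pair (hV : Module.finrank K V = 2)
    {f : End K V} {a b : K} {u v : V} (hu : f.HasEigenvector a u) (hv : f.HasEigenvector b v)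
    (hab : a ≠ b) : LinearMap.det f = a * b := by
  have hli : LinearIndependent K ![u, v] :=
    eigenvectors_linearIndependent' f ![a, b]
      (by simpa [Function.Injective, Fin.forall_fin_two] using ⟨hab, hab.symm⟩) ![u, v]
      (by simpa [Fin.forall_fin_two] using ⟨hu, hv⟩)
  let e := basisOfLinearIndependentOfCardEqFinrank hli (by simp [hV])
  have he : ∀ i, f (e i) = ![a, b] i • e i := by
    intro i
    fin_cases i <;> simp [e, hu.apply_eq_smul, hv.apply_eq_smul]
  rw [← LinearMap.det_toMatrix e, Matrix.det_fin_two]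
  simp [LinearMap.toMatrix_apply, he]

variable [LinearOrder K] [IsStrictOrderedRing K]

theorem not_hasEigenvalue_of_nonpos_of_det_pos (hV : Module.finrank K V = 2) {f : End K V}
    (h1 : f.HasEigenvalue 1) (hdet : 0 < LinearMap.det f) {μ : K} (hμ : μ ≤ 0) :
    ¬ f.HasEigenvalue μ := by
  intro hfμ
  obtain ⟨u, hu⟩ := h1.exists_hasEigenvector
  obtain ⟨v, hv⟩ := hfμ.exists_hasEigenvector
  have := det_eq_mul_of_hasEigenvector_pair hV hu hv (by linarith)
  linarith

theorem one_sub_smul_add_smul_apply_ne_zero {f : End K V} (hf : ∀ μ ≤ 0, ¬ f.HasEigenvalue μ)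
    {s : K} (hs : s ∈ Icc (0 : K) 1) {v : V} (hv : v ≠ 0) : (1 - s) • v + s • f v ≠ 0 := by
  intro hzero
  rcases hs.1.eq_or_lt with rfl | hs0
  · simp_all
  refine hf ((s - 1) / s) (div_nonpos_of_nonpos_of_nonneg (by linarith [hs.2]) hs0.le)
    (hasEigenvalue_of_hasEigenvector (x := v) ⟨?_, hv⟩)
  have hfv : s • f v = (s - 1) • v := by linear_combination (norm := module) hzero
  rw [mem_genEigenspace_one, div_eq_inv_mul, mul_smul, ← hfv, smul_smul, inv_mul_cancel₀ hs0.ne',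
    one_smul]

end Module.End

theorem IsCompact.exists_pos_mul_norm_le {X E F : Type*} [TopologicalSpace X]
    [NormedAddCommGroup E] [NormedSpace ℝ E] [FiniteDimensional ℝ E]
    [NormedAddCommGroup F] [NormedSpace ℝ F] {S : Set X} (hS : IsCompact S)
    {B : X → E →L[ℝ] F} (hB : ContinuousOn B S) (hB0 : ∀ t ∈ S, ∀ v ≠ 0, B t v ≠ 0) :
    ∃ c > 0, ∀ t ∈ S, ∀ v, c * ‖v‖ ≤ ‖B t v‖ := by
  have hcont : ContinuousOn (fun q : X × E => ‖B q.1 q.2‖) (S ×ˢ Metric.sphere 0 1) :=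
    ((hB.comp continuousOn_fst fun _ hq => hq.1).clm_apply continuousOn_snd).norm
  obtain ⟨c, hc, hcle⟩ := (hS.prod (isCompact_sphere 0 1)).exists_forall_le' hcont (a := 0)
    fun q hq => norm_pos_iff.mpr (hB0 q.1 hq.1 q.2 (ne_zero_of_mem_unit_sphere ⟨q.2, hq.2⟩))
  refine ⟨c, hc, fun t ht v => ?_⟩
  rcases eq_or_ne v 0 with rfl | hv
  · simp
  have hunit : ‖v‖⁻¹ • v ∈ Metric.sphere (0 : E) 1 := by simp [norm_smul, hv]
  have := hcle (t, ‖v‖⁻¹ • v) ⟨ht, hunit⟩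
  rw [map_smul, norm_smul, norm_inv, norm_norm] at this
  rwa [← le_inv_mul_iff₀' (norm_pos_iff.mpr hv)]

theorem HasFDerivAt.hasEigenvalue_one_of_mem_closure_fixedPoints {𝕜 E : Type*}
    [NontriviallyNormedField 𝕜] [CompleteSpace 𝕜] [NormedAddCommGroup E] [NormedSpace 𝕜 E]
    [FiniteDimensional 𝕜 E] {f : E → E} {A : E →L[𝕜] E} {x : E} (hf : HasFDerivAt f A x)
    (hacc : x ∈ closure ({z | f z = z} \ {x})) :
    Module.End.HasEigenvalue (A : Module.End 𝕜 E) 1 := by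
  by_contra hA
  have hker : LinearMap.ker ((A - 1 : E →L[𝕜] E) : E →ₗ[𝕜] E) = ⊥ := by
    refine LinearMap.ker_eq_bot'.mpr fun v hv => by_contra fun hv0 => hA ?_
    refine Module.End.hasEigenvalue_of_hasEigenvector (x := v) ⟨?_, hv0⟩
    simpa [sub_eq_zero] using hv
  obtain ⟨C, -, hC⟩ := LinearMap.exists_antilipschitzWith _ hker
  have hmoves : ∀ᶠ z in 𝓝[≠] x, f z - z ≠ 0 :=
    (hf.sub (hasFDerivAt_id x)).eventually_ne ⟨C, hC⟩
  obtain ⟨z, hfz, hz⟩ :=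
    ((mem_closure_ne_iff_frequently_within.mp hacc).and_eventually hmoves).exists
  exact hz (sub_eq_zero.mpr hfz)

theorem HasStrictFDerivAt.exists_segment_not_fixed_of_lower_bound {E : Type*}
    [NormedAddCommGroup E] [NormedSpace ℝ E] {f : E → E} {A : E →L[ℝ] E} {x : E}
    (hf : HasStrictFDerivAt f A x)
    {c : ℝ} (hc : 0 < c) (hA : ∀ s ∈ Icc (0 : ℝ) 1, ∀ v, c * ‖v‖ ≤ ‖(1 - s) • v + s • A v‖) :
    ∃ ε > (0 : ℝ), ∀ p, f p ≠ p → ‖p - x‖ < ε → ‖f p - x‖ < ε →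
      ∀ s ∈ Icc (0 : ℝ) 1, f ((1 - s) • p + s • f p) ≠ (1 - s) • p + s • f p := by
  obtain ⟨ε, hε, hlin⟩ := Metric.eventually_nhds_iff.mp (hf.isLittleO.def (half_pos hc))
  refine ⟨ε, hε, fun p hp hpx hfpx s hs hfix => ?_⟩
  set q := (1 - s) • p + s • f p
  set g := f p - p
  have hqx : ‖q - x‖ < ε := by
    simpa [dist_eq_norm] using
      (convex_ball x ε) (by simpa [dist_eq_norm] using hpx) (by simpa [dist_eq_norm] using hfpx)
        (sub_nonneg.mpr hs.2) hs.1 (sub_add_cancel 1 s)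
  have hclose : ‖(1 - s) • g + s • A g‖ ≤ c / 2 * (s * ‖g‖) := by
    have h := @hlin (q, p) (by simpa [Prod.dist_eq, dist_eq_norm] using ⟨hqx, hpx⟩)
    have hqp : q - p = s • g := by simp only [q, g]; module
    have hdiff : f q - f p - A (q - p) = -((1 - s) • g + s • A g) := by
      rw [hfix, hqp, map_smul]; simp only [q, g]; module
    rwa [hdiff, norm_neg, hqp, norm_smul, Real.norm_of_nonneg hs.1] at h
  have hg : 0 < ‖g‖ := norm_pos_iff.mpr (sub_ne_zero.mpr hp)
  nlinarith [hA s hs g, hs.2, mul_pos hc hg]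

theorem HasStrictFDerivAt.exists_segment_not_fixed_of_det_pos {E : Type*}
    [NormedAddCommGroup E] [NormedSpace ℝ E] (hE : Module.finrank ℝ E = 2)
    {f : E → E} {A : E →L[ℝ] E} {x : E} (hf : HasStrictFDerivAt f A x) (hdet : 0 < A.det)
    (hacc : x ∈ closure ({z | f z = z} \ {x})) :
    ∃ ε > (0 : ℝ), ∀ p, f p ≠ p → ‖p - x‖ < ε → ‖f p - x‖ < ε →
      ∀ s ∈ Icc (0 : ℝ) 1, f ((1 - s) • p + s • f p) ≠ (1 - s) • p + s • f p := by
  have : FiniteDimensional ℝ E := .of_finrank_eq_succ hE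
  have hA1 := hf.hasFDerivAt.hasEigenvalue_one_of_mem_closure_fixedPoints hacc
  have hAneg (μ : ℝ) (hμ : μ ≤ 0) : ¬ Module.End.HasEigenvalue (A : Module.End ℝ E) μ :=
    Module.End.not_hasEigenvalue_of_nonpos_of_det_pos hE hA1 hdet hμ
  have hB : Continuous fun s : ℝ => (1 - s) • (1 : E →L[ℝ] E) + s • A := by fun_prop
  obtain ⟨c, hc, hbound⟩ := isCompact_Icc.exists_pos_mul_norm_le hB.continuousOn
    fun s hs v hv => by simpa using Module.End.one_sub_smul_add_smul_apply_ne_zero hAneg hs hv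
  exact hf.exists_segment_not_fixed_of_lower_bound hc fun s hs v => by simpa using hbound s hs v

theorem stmt_6_general (f : EuclideanSpace ℝ (Fin 2) → EuclideanSpace ℝ (Fin 2))
    (hf : ContDiff ℝ 1 f) (x : EuclideanSpace ℝ (Fin 2))
    (hdet : 0 < (fderiv ℝ f x).det)
    (hacc : x ∈ closure ({z | f z = z} \ {x})) :
    ∃ ε > (0 : ℝ), ∀ p, f p ≠ p → ‖p - x‖ < ε → ‖f p - x‖ < ε →
      ∀ s ∈ Set.Icc (0 : ℝ) 1,
        f ((1 - s) • p + s • f p) ≠ (1 - s) • p + s • f p :=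
  (hf.hasStrictFDerivAt one_ne_zero).exists_segment_not_fixed_of_det_pos
    finrank_euclideanSpace_fin hdet hacc

/-- Let `f` be a `C¹` map of the plane fixing `x`, with `det Df_x > 0`, and
suppose `x` is an accumulation point of `Fix f`.  Then there is `ε > 0` such that for every
non-fixed point `p` with `p` and `f p` in the `ε`-ball about `x`, the straight segment from
`p` to `f p` contains no fixed point of `f`. -/
theorem stmt_6 (f : EuclideanSpace ℝ (Fin 2) → EuclideanSpace ℝ (Fin 2))
    (hf : ContDiff ℝ 1 f) (x : EuclideanSpace ℝ (Fin 2)) (hx : f x = x)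
    (hdet : 0 < (fderiv ℝ f x).det)
    (hacc : x ∈ closure ({z | f z = z} \ {x})) :
    ∃ ε > (0 : ℝ), ∀ p, f p ≠ p → ‖p - x‖ < ε → ‖f p - x‖ < ε →
      ∀ s ∈ Set.Icc (0 : ℝ) 1,
        f ((1 - s) • p + s • f p) ≠ (1 - s) • p + s • f p :=
  stmt_6_general f hf x hdet hacc
end

section
/- Let f : ℝ² → ℝ² be a C¹ map with f(x) = x and suppose the derivative Df_x has positive determinant. Then there exists ε > 0 such that for every fixed point y of f with ‖y − x‖ < ε and every point z on the closed straight line segment from x to y, either f(z) = z, or the closed straight line segment from z to f(z) contains no fixed point of f. Consequently, for such y the straight-line homotopy H(t,s) = (1−t)·α(s) + t·f(α(s)), where α parametrizes the segment from x to y, is a homotopy rel Fix(f) from α to f ∘ α. -/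
/-!
Write `A = Df_x`. Strict differentiability of `f` at `x` makes `f` approximate `A` uniformly on
small balls. A fixed point `y ≠ x` near `x` then makes `y - x` an almost fixed vector of `A`, and a
fixed point `z + t (f z - z)`, `t ∈ [0, 1]`, near `x` makes `f z - z` an almost eigenvector of `A`
with eigenvalue `-(1 - t) / t ≤ 0`. For exact vectors this is impossible when `det A > 0`: if the
two are independent, `det A` is the product of the eigenvalues `1` and `-(1 - t) / t`; if they
are parallel, the two eigenvalues would coincide. Compactness of the unit circle makes the obstruction robust.
-/

open Set Metric Function
open scoped NNReal Topology

noncomputable def seg (p q : EuclideanSpace ℝ (Fin 2)) (s : ℝ) : EuclideanSpace ℝ (Fin 2) :=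
  (1 - s) • p + s • q

@[simp]
theorem seg_zero (p q : EuclideanSpace ℝ (Fin 2)) : seg p q 0 = p := by
  simp [seg]

@[simp]
theorem seg_one (p q : EuclideanSpace ℝ (Fin 2)) : seg p q 1 = q := by
  simp [seg]

@[simp]
theorem seg_self (p : EuclideanSpace ℝ (Fin 2)) (s : ℝ) : seg p p s = p := by
  simp only [seg]; module

namespace ApproximatesLinearOn

variable {E : Type*} [NormedAddCommGroup E] [NormedSpace ℝ E] {f : E → E} {A : E →L[ℝ] E}
  {s : Set E} {c : ℝ≥0}

theorem norm_map_sub_sub_le (hf : ApproximatesLinearOn f A s c) {x y : E} (hx : x ∈ s)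
    (hy : y ∈ s) (hfx : IsFixedPt f x) (hfy : IsFixedPt f y) :
    ‖A (y - x) - (y - x)‖ ≤ c * ‖y - x‖ := by
  rw [norm_sub_rev]
  simpa [hfx.eq, hfy.eq] using hf y hy x hx

theorem norm_one_sub_smul_add_smul_map_le (hf : ApproximatesLinearOn f A s c) {z : E} {t : ℝ}
    (hz : z ∈ s) (ht : t ∈ Icc (0 : ℝ) 1) (hw : (1 - t) • z + t • f z ∈ s)
    (hfw : IsFixedPt f ((1 - t) • z + t • f z)) :
    ‖(1 - t) • (f z - z) + t • A (f z - z)‖ ≤ c * ‖f z - z‖ := by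
  set w := (1 - t) • z + t • f z
  have hwz : w - z = t • (f z - z) := by module
  have hdefect : f w - f z - A (w - z) = -((1 - t) • (f z - z) + t • A (f z - z)) := by
    rw [hfw.eq, hwz, map_smul]; module
  calc ‖(1 - t) • (f z - z) + t • A (f z - z)‖ = ‖f w - f z - A (w - z)‖ := by
        rw [hdefect, norm_neg]
    _ ≤ c * ‖w - z‖ := hf w hw z hz
    _ = c * (t * ‖f z - z‖) := by rw [hwz, norm_smul, Real.norm_of_nonneg ht.1]
    _ ≤ c * ‖f z - z‖ := by gcongr; exact mul_le_of_le_one_left (norm_nonneg _) ht.2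

theorem not_isFixedPt_one_sub_smul_add_smul {η : ℝ}
    (hA : ∀ a b : E, a ≠ 0 → b ≠ 0 → ∀ t ∈ Icc (0 : ℝ) 1,
      ‖A a - a‖ ≤ η * ‖a‖ → η * ‖b‖ ≤ ‖(1 - t) • b + t • A b‖)
    (hf : ApproximatesLinearOn f A s c) (hcη : c < η) (hs : Convex ℝ s) {x y z : E}
    (hx : x ∈ s) (hy : y ∈ s) (hfx : IsFixedPt f x) (hfy : IsFixedPt f y) (hxy : x ≠ y)
    (hz : z ∈ s) (hfz : f z ∈ s) (hz_fix : ¬IsFixedPt f z) {t : ℝ} (ht : t ∈ Icc (0 : ℝ) 1) :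
    ¬IsFixedPt f ((1 - t) • z + t • f z) := by
  intro hfw
  have hg : f z - z ≠ 0 := sub_ne_zero.2 hz_fix
  have hw : (1 - t) • z + t • f z ∈ s := hs hz hfz (sub_nonneg.2 ht.2) ht.1 (sub_add_cancel 1 t)
  have hfixed : ‖A (y - x) - (y - x)‖ ≤ η * ‖y - x‖ :=
    (hf.norm_map_sub_sub_le hx hy hfx hfy).trans (by gcongr)
  have hlower := hA (y - x) (f z - z) (sub_ne_zero.2 hxy.symm) hg t ht hfixed
  have hupper := hf.norm_one_sub_smul_add_smul_map_le hz ht hw hfw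
  have hcη' : (c : ℝ) * ‖f z - z‖ < η * ‖f z - z‖ :=
    mul_lt_mul_of_pos_right hcη (norm_pos_iff.2 hg)
  linarith

end ApproximatesLinearOn

section Plane

local notation "ℝ²" => EuclideanSpace ℝ (Fin 2)

theorem ContinuousLinearMap.det_eq_of_fin_two (A : ℝ² →L[ℝ] ℝ²) :
    A.det = A (EuclideanSpace.single 0 1) 0 * A (EuclideanSpace.single 1 1) 1 -
      A (EuclideanSpace.single 0 1) 1 * A (EuclideanSpace.single 1 1) 0 := by
  rw [ContinuousLinearMap.det, ← LinearMap.det_toMatrix (EuclideanSpace.basisFun (Fin 2) ℝ).toBasis,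
    Matrix.det_fin_two]
  simp only [LinearMap.toMatrix_apply, OrthonormalBasis.coe_toBasis,
    EuclideanSpace.basisFun_apply, OrthonormalBasis.coe_toBasis_repr_apply,
    EuclideanSpace.basisFun_repr, ContinuousLinearMap.coe_coe]
  ring

def wedge (a b : ℝ²) : ℝ :=
  a 0 * b 1 - a 1 * b 0

theorem wedge_map (A : ℝ² →L[ℝ] ℝ²) (a b : ℝ²) : wedge (A a) (A b) = A.det * wedge a b := by
  have hA : ∀ v : ℝ²,
      A v = v 0 • A (EuclideanSpace.single 0 1) + v 1 • A (EuclideanSpace.single 1 1) := by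
    intro v
    rw [← map_smul, ← map_smul, ← map_add]
    congr 1
    ext i; fin_cases i <;> simp
  rw [A.det_eq_of_fin_two, wedge, wedge, hA a, hA b]
  simp only [PiLp.add_apply, PiLp.smul_apply, smul_eq_mul]
  ring

theorem map_eq_self_of_wedge_eq_zero {A : ℝ² →L[ℝ] ℝ²} {a b : ℝ²} (hAa : A a = a) (ha : a ≠ 0)
    (hab : wedge a b = 0) : A b = b := by
  have hr : a 0 ^ 2 + a 1 ^ 2 ≠ 0 := by
    contrapose! ha
    have h0 : a 0 = 0 := by nlinarith [sq_nonneg (a 0), sq_nonneg (a 1)]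
    have h1 : a 1 = 0 := by nlinarith [sq_nonneg (a 0), sq_nonneg (a 1)]
    ext i; fin_cases i <;> simp [h0, h1]
  have hb : (a 0 ^ 2 + a 1 ^ 2) • b = (a 0 * b 0 + a 1 * b 1) • a := by
    unfold wedge at hab
    ext i; fin_cases i <;> simp only [Fin.zero_eta, Fin.mk_one, PiLp.smul_apply, smul_eq_mul]
    · linear_combination (-a 1) * hab
    · linear_combination a 0 * hab
  apply smul_right_injective _ hr
  simp only [← map_smul, hb]
  rw [map_smul, hAa]

theorem one_sub_smul_add_smul_map_ne_zero {A : ℝ² →L[ℝ] ℝ²} (hdet : 0 < A.det) {a b : ℝ²}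
    (hAa : A a = a) (ha : a ≠ 0) (hb : b ≠ 0) {t : ℝ} (ht : t ∈ Icc (0 : ℝ) 1) :
    (1 - t) • b + t • A b ≠ 0 := by
  intro h
  by_cases hab : wedge a b = 0
  · rw [map_eq_self_of_wedge_eq_zero hAa ha hab, ← add_smul, sub_add_cancel, one_smul] at h
    exact hb h
  have hAb : wedge a (A b) = A.det * wedge a b := by simpa [hAa] using wedge_map A a b
  have hzero : (1 - t + t * A.det) * wedge a b = 0 := by
    calc (1 - t + t * A.det) * wedge a b = wedge a ((1 - t) • b + t • A b) := by
          simp only [wedge, PiLp.add_apply, PiLp.smul_apply, smul_eq_mul] at hAb ⊢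
          linear_combination (-t) * hAb
      _ = 0 := by simp [h, wedge]
  have hpos : 0 < 1 - t + t * A.det := by
    rcases ht.2.lt_or_eq with ht1 | rfl
    · nlinarith [mul_nonneg ht.1 hdet.le]
    · simpa using hdet
  exact hab ((mul_eq_zero.1 hzero).resolve_left hpos.ne')

theorem exists_pos_mul_norm_le_one_sub_smul_add_smul_map {A : ℝ² →L[ℝ] ℝ²} (hdet : 0 < A.det) :
    ∃ η > 0, ∀ a b : ℝ², a ≠ 0 → b ≠ 0 → ∀ t ∈ Icc (0 : ℝ) 1,
      ‖A a - a‖ ≤ η * ‖a‖ → η * ‖b‖ ≤ ‖(1 - t) • b + t • A b‖ := by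
  set K := sphere (0 : ℝ²) 1 ×ˢ sphere (0 : ℝ²) 1 ×ˢ Icc (0 : ℝ) 1
  set φ : ℝ² × ℝ² × ℝ → ℝ := fun p => ‖A p.1 - p.1‖ + ‖(1 - p.2.2) • p.2.1 + p.2.2 • A p.2.1‖
  have hK : IsCompact K := (isCompact_sphere 0 1).prod ((isCompact_sphere 0 1).prod isCompact_Icc)
  have hφ : ∀ p ∈ K, 0 < φ p := by
    rintro ⟨u, v, t⟩ ⟨hu, hv, ht⟩
    have hu0 : u ≠ 0 := ne_zero_of_mem_unit_sphere ⟨u, hu⟩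
    have hv0 : v ≠ 0 := ne_zero_of_mem_unit_sphere ⟨v, hv⟩
    by_contra! hle
    have hfix : ‖A u - u‖ = 0 := le_antisymm (by linarith [norm_nonneg ((1 - t) • v + t • A v)])
      (norm_nonneg _)
    have hseg : ‖(1 - t) • v + t • A v‖ = 0 := le_antisymm (by linarith [norm_nonneg (A u - u)])
      (norm_nonneg _)
    exact one_sub_smul_add_smul_map_ne_zero hdet (sub_eq_zero.1 (norm_eq_zero.1 hfix)) hu0 hv0 ht
      (norm_eq_zero.1 hseg)
  obtain ⟨η, hη, hηφ⟩ := hK.exists_forall_le' (by fun_prop : Continuous φ).continuousOn hφ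
  refine ⟨η / 2, by positivity, fun a b ha hb t ht hAa => ?_⟩
  have hna := norm_pos_iff.2 ha
  have hnb := norm_pos_iff.2 hb
  have hmem : (‖a‖⁻¹ • a, ‖b‖⁻¹ • b, t) ∈ K :=
    ⟨by simpa using norm_smul_inv_norm (𝕜 := ℝ) ha, by simpa using norm_smul_inv_norm (𝕜 := ℝ) hb,
      ht⟩
  have hscale : φ (‖a‖⁻¹ • a, ‖b‖⁻¹ • b, t) =
      ‖a‖⁻¹ * ‖A a - a‖ + ‖b‖⁻¹ * ‖(1 - t) • b + t • A b‖ := by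
    have h₁ : A (‖a‖⁻¹ • a) - ‖a‖⁻¹ • a = ‖a‖⁻¹ • (A a - a) := by rw [map_smul, smul_sub]
    have h₂ : (1 - t) • (‖b‖⁻¹ • b) + t • A (‖b‖⁻¹ • b) = ‖b‖⁻¹ • ((1 - t) • b + t • A b) := by
      rw [map_smul]; module
    simp only [φ, h₁, h₂, norm_smul, norm_inv, norm_norm]
  have hfixed : ‖a‖⁻¹ * ‖A a - a‖ ≤ η / 2 := (inv_mul_le_iff₀ hna).2 (by linarith)
  have hsum := hηφ _ hmem
  rw [hscale] at hsum
  have hseg : η / 2 ≤ ‖b‖⁻¹ * ‖(1 - t) • b + t • A b‖ := by linarith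
  linarith [(le_inv_mul_iff₀ hnb).1 hseg]

end Plane

/-- Let `f` be a `C¹` map of the plane fixing `x` with `det Df_x > 0`.  There
is `ε > 0` such that for every fixed point `y` with `‖y - x‖ < ε` and every `z` on the
segment from `x` to `y`, either `f z = z` or the segment from `z` to `f z` contains no
fixed point of `f`; consequently the straight-line homotopy
`H t s = (1 - t) • α s + t • f (α s)`, where `α = seg x y` parametrizes the segment from
`x` to `y`, is a homotopy rel `Fix f` from `α` to `f ∘ α`. -/
theorem stmt_8 (f : EuclideanSpace ℝ (Fin 2) → EuclideanSpace ℝ (Fin 2))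
    (hf : ContDiff ℝ 1 f) (x : EuclideanSpace ℝ (Fin 2)) (hx : f x = x)
    (hdet : 0 < (fderiv ℝ f x).det) :
    ∃ ε > (0 : ℝ), ∀ y, f y = y → ‖y - x‖ < ε →
      (∀ s ∈ Set.Icc (0 : ℝ) 1,
        f (seg x y s) = seg x y s ∨
        ∀ t ∈ Set.Icc (0 : ℝ) 1,
          f (seg (seg x y s) (f (seg x y s)) t) ≠ seg (seg x y s) (f (seg x y s)) t) ∧
      -- the straight-line homotopy `H t s = seg (α s) (f (α s)) t` is a homotopy
      -- rel `Fix f` from `α` to `f ∘ α`, where `α = seg x y`: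
      (ContinuousOn (fun q : ℝ × ℝ => seg (seg x y q.2) (f (seg x y q.2)) q.1)
          (Set.Icc 0 1 ×ˢ Set.Icc 0 1) ∧
        (∀ s ∈ Set.Icc (0 : ℝ) 1,
          seg (seg x y s) (f (seg x y s)) 0 = seg x y s ∧
          seg (seg x y s) (f (seg x y s)) 1 = f (seg x y s)) ∧
        (∀ t ∈ Set.Icc (0 : ℝ) 1,
          seg (seg x y 0) (f (seg x y 0)) t = x ∧
          seg (seg x y 1) (f (seg x y 1)) t = y) ∧
        (∀ s ∈ Set.Icc (0 : ℝ) 1, ∀ t₀ ∈ Set.Icc (0 : ℝ) 1,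
          seg (seg x y s) (f (seg x y s)) t₀ ∈ {z | f z = z} →
          ∀ t ∈ Set.Icc (0 : ℝ) 1,
            seg (seg x y s) (f (seg x y s)) t =
              seg (seg x y s) (f (seg x y s)) t₀)) := by
  obtain ⟨η, hη, hA⟩ := exists_pos_mul_norm_le_one_sub_smul_add_smul_map hdet
  obtain ⟨s, hs, hfs⟩ := (hf.contDiffAt.hasStrictFDerivAt one_ne_zero).approximates_deriv_on_nhds
    (c := ⟨η / 2, by positivity⟩) (Or.inr (by change 0 < η / 2; positivity))
  obtain ⟨δ, hδ, hδs⟩ := Metric.mem_nhds_iff.1 hs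
  have hnear : ∀ᶠ z in 𝓝 x, z ∈ ball x δ ∧ f z ∈ ball x δ :=
    Filter.Eventually.and (ball_mem_nhds x hδ)
      (hf.continuous.continuousAt.eventually_mem (by rw [hx]; exact ball_mem_nhds x hδ))
  obtain ⟨ε, hε, hεδ⟩ := Metric.eventually_nhds_iff_ball.1 hnear
  refine ⟨ε, hε, fun y hy hyx => ?_⟩
  have hfree : ∀ σ ∈ Icc (0 : ℝ) 1, f (seg x y σ) = seg x y σ ∨
      ∀ t ∈ Icc (0 : ℝ) 1,
        f (seg (seg x y σ) (f (seg x y σ)) t) ≠ seg (seg x y σ) (f (seg x y σ)) t := by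
    intro σ hσ
    rcases eq_or_ne x y with rfl | hxy
    · exact .inl (by rwa [seg_self])
    have hαε : seg x y σ ∈ ball x ε := convex_ball x ε (mem_ball_self hε)
      (mem_ball_iff_norm.2 hyx) (sub_nonneg.2 hσ.2) hσ.1 (sub_add_cancel 1 σ)
    refine or_iff_not_imp_left.2 fun hα t ht => ?_
    exact (hfs.mono_set hδs).not_isFixedPt_one_sub_smul_add_smul hA (by change η / 2 < η; linarith)
      (convex_ball x δ) (mem_ball_self hδ) (hεδ y (mem_ball_iff_norm.2 hyx)).1 hx hy hxy
      (hεδ _ hαε).1 (hεδ _ hαε).2 hα ht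
  refine ⟨hfree, ?_, fun _ _ => ⟨seg_zero _ _, seg_one _ _⟩,
    fun _ _ => ⟨by rw [seg_zero, hx, seg_self], by rw [seg_one, hy, seg_self]⟩, ?_⟩
  · have := hf.continuous
    exact Continuous.continuousOn (by unfold seg; fun_prop)
  · intro σ hσ t₀ ht₀ hfix t _
    rcases hfree σ hσ with hα | hnone
    · rw [hα, seg_self, seg_self]
    · exact absurd hfix (hnone t₀ ht₀)
end

section
/- Let f : ℝ² → ℝ² be a C¹ diffeomorphism with positive Jacobian determinant at every point, and let K ⊆ ℝ² be a compact set with f(K) = K such that Fix(f) ∩ K is open in K (subspace topology). Then f has locally constant Nielsen behavior rel K: for every x ∈ Fix(f) and every neighborhood N of x, there exist open sets U and V with x ∈ U ⊆ V ⊆ N such that for every y ∈ U ∩ Fix(f) there is a path α : [0,1] → ℝ² from x to y with image contained in U, together with a homotopy rel K from α to f ∘ α whose image is contained in V. -/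
/-! The homotopy from `α` to `f ∘ α` is the straight-line one, `H t s = α s + t • (f (α s) - α s)`.
Near a fixed point `x` every point of `K` is fixed (`K` is closed and `Fix f ∩ K` is open in `K`),
so `H` is rel `K` as soon as, for `p` on `α`, a fixed point `q = p + t • (f p - p)` on the track
of `p` forces `f p = p`.

Let `v = f - id` and `B = Dv(x)`. If `B` is injective, `x` is an isolated fixed point and constant
paths do. Otherwise `B` has rank at most one, with range in a line `ℝ e`. Since `q` is fixed,
`v p = B (p - q) + w` with `‖w‖` small against `‖p - q‖ ≤ ‖v p‖`; on `Γ = {p | ⟪e, v p⟫ = 0}`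
the error `w` also bounds `B (p - q)`, hence `v p = 0`. The set `Γ` contains every fixed point;
it is the whole plane when `B = 0` and a `C¹` curve through `x` (implicit function theorem)
otherwise, so paths between nearby fixed points can be chosen inside `Γ`.
-/

/-- `α : ℝ → X`, restricted to `[0,1]`, is a path from `x` to `y`. -/
def IsPathFromTo {X : Type*} [TopologicalSpace X] (α : ℝ → X) (x y : X) : Prop :=
  ContinuousOn α (Set.Icc 0 1) ∧ α 0 = x ∧ α 1 = y

/-- `H` is a homotopy rel `K` from `α` to `β` (paths from `x` to `y`) whose image is
contained in `V`. -/
def HomotopyRelIn {X : Type*} [TopologicalSpace X] (K V : Set X) (x y : X)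
    (α β : ℝ → X) : Prop :=
  ∃ H : ℝ → ℝ → X,
    ContinuousOn (fun p : ℝ × ℝ => H p.1 p.2) (Set.Icc 0 1 ×ˢ Set.Icc 0 1) ∧
    (∀ s ∈ Set.Icc (0 : ℝ) 1, H 0 s = α s ∧ H 1 s = β s) ∧
    (∀ t ∈ Set.Icc (0 : ℝ) 1, H t 0 = x ∧ H t 1 = y) ∧
    (∀ s ∈ Set.Icc (0 : ℝ) 1, ∀ t₀ ∈ Set.Icc (0 : ℝ) 1, H t₀ s ∈ K →
      ∀ t ∈ Set.Icc (0 : ℝ) 1, H t s = H t₀ s) ∧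
    (∀ t ∈ Set.Icc (0 : ℝ) 1, ∀ s ∈ Set.Icc (0 : ℝ) 1, H t s ∈ V)

open Set Filter Topology Function
open scoped RealInnerProductSpace

section TopologicalSpace

variable {X : Type*} [TopologicalSpace X]

def HasLocallyConstantNielsenAt (f : X → X) (K : Set X) (x : X) : Prop :=
  ∀ N ∈ 𝓝 x, ∃ U V : Set X, IsOpen U ∧ IsOpen V ∧ x ∈ U ∧ U ⊆ V ∧ V ⊆ N ∧
    ∀ y ∈ U, f y = y → ∃ α : ℝ → X, IsPathFromTo α x y ∧ α '' Icc 0 1 ⊆ U ∧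
      HomotopyRelIn K V x y α (f ∘ α)

def FixedPointsJoinableWithin (f : X → X) (x : X) (Γ : Set X) : Prop :=
  ∀ W ∈ 𝓝 x, ∃ U ⊆ W, IsOpen U ∧ x ∈ U ∧
    ∀ y ∈ U, f y = y → ∃ α : ℝ → X, IsPathFromTo α x y ∧ α '' Icc 0 1 ⊆ U ∩ Γ

theorem FixedPointsJoinableWithin.mono {f : X → X} {x : X} {Γ Γ' : Set X}
    (h : FixedPointsJoinableWithin f x Γ) (hΓ : Γ ⊆ Γ') :
    FixedPointsJoinableWithin f x Γ' := by
  intro W hW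
  obtain ⟨U, hUW, hU, hxU, hpath⟩ := h W hW
  refine ⟨U, hUW, hU, hxU, fun y hy hfy => ?_⟩
  obtain ⟨α, hα, hαU⟩ := hpath y hy hfy
  exact ⟨α, hα, hαU.trans (inter_subset_inter_right U hΓ)⟩

theorem fixedPointsJoinableWithin_singleton {f : X → X} {x : X}
    (h : ∀ᶠ y in 𝓝 x, f y = y → y = x) : FixedPointsJoinableWithin f x {x} := by
  intro W hW
  obtain ⟨U, hUsub, hU, hxU⟩ := mem_nhds_iff.1 (inter_mem hW h)
  refine ⟨U, fun p hp => (hUsub hp).1, hU, hxU, fun y hy hfy => ?_⟩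
  obtain rfl := (hUsub hy).2 hfy
  exact ⟨fun _ => y, ⟨continuousOn_const, rfl, rfl⟩, by rintro _ ⟨s, -, rfl⟩; exact ⟨hy, rfl⟩⟩

theorem eventually_mem_imp_apply_eq_of_isOpen_fixedPoints {f : X → X} {K : Set X}
    (hK : IsClosed K) (hKfix : IsOpen ((fun y : K => (y : X)) ⁻¹' {z | f z = z})) {x : X}
    (hx : f x = x) :
    ∀ᶠ q in 𝓝 x, q ∈ K → f q = q := by
  by_cases hxK : x ∈ K
  · obtain ⟨O, hO, hOK⟩ := isOpen_induced_iff.1 hKfix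
    filter_upwards [hO.mem_nhds ((Set.ext_iff.1 hOK ⟨x, hxK⟩).2 hx)] with q hqO hqK
    exact (Set.ext_iff.1 hOK ⟨q, hqK⟩).1 hqO
  · filter_upwards [hK.isOpen_compl.mem_nhds hxK] with q hqK hqK' using absurd hqK' hqK

theorem fixedPointsJoinableWithin_preimage {F : Type*} [NormedAddCommGroup F] [NormedSpace ℝ F]
    {f : X → X} {x : X} (hx : f x = x) (Φ : OpenPartialHomeomorph X F) (hxΦ : x ∈ Φ.source)
    {C : Set F} (hC : Convex ℝ C) (hfix : ∀ y, f y = y → Φ y ∈ C) :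
    FixedPointsJoinableWithin f x (Φ ⁻¹' C) := by
  intro W hW
  have hT : Φ.target ∩ Φ.symm ⁻¹' (interior W ∩ Φ.source) ∈ 𝓝 (Φ x) :=
    (Φ.isOpen_inter_preimage_symm (isOpen_interior.inter Φ.open_source)).mem_nhds
      ⟨Φ.map_source hxΦ, by simpa [Φ.left_inv hxΦ] using ⟨mem_interior_iff_mem_nhds.2 hW, hxΦ⟩⟩
  obtain ⟨r, hr, hrT⟩ := Metric.mem_nhds_iff.1 hT
  refine ⟨Φ.source ∩ Φ ⁻¹' Metric.ball (Φ x) r, fun p hp => ?_,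
    Φ.isOpen_inter_preimage Metric.isOpen_ball, ⟨hxΦ, Metric.mem_ball_self hr⟩, ?_⟩
  · simpa [Φ.left_inv hp.1] using interior_subset (hrT hp.2).2.1
  intro y hy hfy
  set c : ℝ → F := fun s => Φ x + s • (Φ y - Φ x)
  have hcT : ∀ s ∈ Icc (0 : ℝ) 1, c s ∈ Φ.target ∩ Φ.symm ⁻¹' (interior W ∩ Φ.source) :=
    fun s hs => hrT ((convex_ball _ r).add_smul_sub_mem (Metric.mem_ball_self hr) hy.2 hs)
  refine ⟨Φ.symm ∘ c, ⟨?_, by simp [c, Φ.left_inv hxΦ], by simp [c, Φ.left_inv hy.1]⟩, ?_⟩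
  · exact Φ.continuousOn_symm.comp (by fun_prop) fun s hs => (hcT s hs).1
  rintro _ ⟨s, hs, rfl⟩
  have hΦc : Φ (Φ.symm (c s)) = c s := Φ.right_inv (hcT s hs).1
  refine ⟨⟨(hcT s hs).2.2, ?_⟩, ?_⟩
  · rw [mem_preimage, comp_apply, hΦc]
    exact (convex_ball _ r).add_smul_sub_mem (Metric.mem_ball_self hr) hy.2 hs
  · rw [mem_preimage, comp_apply, hΦc]
    exact hC.add_smul_sub_mem (hfix x hx) (hfix y hfy) hs

end TopologicalSpace

section NormedSpace

variable {E : Type*} [NormedAddCommGroup E] [NormedSpace ℝ E]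

theorem eventually_forall_add_smul_sub_mem {f : E → E} {x : E} (hf : ContinuousAt f x)
    (hx : f x = x) {M : Set E} (hM : M ∈ 𝓝 x) :
    ∀ᶠ p in 𝓝 x, ∀ t ∈ Icc (0 : ℝ) 1, p + t • (f p - p) ∈ M := by
  obtain ⟨ε, hε, hεM⟩ := Metric.mem_nhds_iff.1 hM
  have hfp : ∀ᶠ p in 𝓝 x, f p ∈ Metric.ball x ε :=
    hf (by rw [hx]; exact Metric.ball_mem_nhds x hε)
  filter_upwards [Metric.ball_mem_nhds x hε, hfp] with p hp hfp t ht
  exact hεM ((convex_ball x ε).add_smul_sub_mem hp hfp ht)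

theorem homotopyRelIn_straightLine {f : E → E} (hf : Continuous f) {K V : Set E} {x y : E}
    {α : ℝ → E} (hα : IsPathFromTo α x y) (hx : f x = x) (hy : f y = y)
    (hrigid : ∀ s ∈ Icc (0 : ℝ) 1, ∀ t ∈ Icc (0 : ℝ) 1,
      α s + t • (f (α s) - α s) ∈ K → f (α s) = α s)
    (hV : ∀ s ∈ Icc (0 : ℝ) 1, ∀ t ∈ Icc (0 : ℝ) 1, α s + t • (f (α s) - α s) ∈ V) :
    HomotopyRelIn K V x y α (f ∘ α) := by
  obtain ⟨hαc, hα0, hα1⟩ := hα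
  refine ⟨fun t s => α s + t • (f (α s) - α s), ?_, fun s _ => by simp, fun t _ => by
    simp [hα0, hα1, hx, hy], fun s hs t₀ ht₀ hK t _ => by simp [hrigid s hs t₀ ht₀ hK],
    fun t ht s hs => hV s hs t ht⟩
  have hαc' : ContinuousOn (fun p : ℝ × ℝ => α p.2) (Icc 0 1 ×ˢ Icc 0 1) :=
    hαc.comp continuous_snd.continuousOn fun p hp => hp.2
  exact hαc'.add (continuous_fst.continuousOn.smul ((hf.comp_continuousOn hαc').sub hαc'))

theorem hasLocallyConstantNielsenAt_of_joinableWithin {f : E → E} (hf : Continuous f) {K : Set E}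
    {x : E} (hx : f x = x) {Γ : Set E}
    (hrigid : ∀ᶠ p in 𝓝 x, p ∈ Γ → ∀ t ∈ Icc (0 : ℝ) 1, p + t • (f p - p) ∈ K → f p = p)
    (hΓ : FixedPointsJoinableWithin f x Γ) : HasLocallyConstantNielsenAt f K x := by
  intro N hN
  have htrack := eventually_forall_add_smul_sub_mem hf.continuousAt hx (interior_mem_nhds.2 hN)
  obtain ⟨U, hUW, hU, hxU, hpath⟩ := hΓ _ (hrigid.and htrack)
  refine ⟨U, interior N, hU, isOpen_interior, hxU,
    fun p hp => by simpa using (hUW hp).2 0 ⟨le_rfl, zero_le_one⟩, interior_subset, ?_⟩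
  intro y hyU hy
  obtain ⟨α, hα, hαU⟩ := hpath y hyU hy
  have hmem : ∀ s ∈ Icc (0 : ℝ) 1, α s ∈ U ∩ Γ := fun s hs => hαU (mem_image_of_mem α hs)
  exact ⟨α, hα, fun z hz => (hαU hz).1, homotopyRelIn_straightLine hf hα hx hy
    (fun s hs => (hUW (hmem s hs).1).1 (hmem s hs).2) (fun s hs => (hUW (hmem s hs).1).2)⟩

theorem ApproximatesLinearOn.eq_zero_of_map_add_smul_eq_zero {v : E → E} {B : E →L[ℝ] E}
    {ℓ : StrongDual ℝ E} {s : Set E} (hv : ApproximatesLinearOn v B s 4⁻¹) (hℓ : ‖ℓ‖ ≤ 1)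
    (hB : ∀ z, ‖B z‖ ≤ |ℓ (B z)|) {p : E} (hp : p ∈ s) (hℓp : ℓ (v p) = 0) {t : ℝ}
    (ht : t ∈ Icc (0 : ℝ) 1) (hq : p + t • v p ∈ s) (hvq : v (p + t • v p) = 0) : v p = 0 := by
  set q := p + t • v p
  set w := v p - B (p - q)
  have hw : ‖w‖ ≤ 4⁻¹ * ‖p - q‖ := by simpa [w, hvq] using hv p hp q hq
  have hpq : ‖p - q‖ ≤ ‖v p‖ := by
    rw [show p - q = -(t • v p) by simp [q], norm_neg, norm_smul, Real.norm_of_nonneg ht.1]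
    exact mul_le_of_le_one_left (norm_nonneg _) ht.2
  -- `ℓ` kills `v p`, so it sees `B (p - q)` only through the error term `w`
  have hBpq : ‖B (p - q)‖ ≤ ‖w‖ := calc
    ‖B (p - q)‖ ≤ |ℓ (B (p - q))| := hB _
    _ = ‖ℓ w‖ := by simp [w, hℓp, Real.norm_eq_abs, abs_sub_comm]
    _ ≤ ‖ℓ‖ * ‖w‖ := ℓ.le_opNorm w
    _ ≤ ‖w‖ := mul_le_of_le_one_left (norm_nonneg _) hℓ
  have : ‖v p‖ ≤ 2⁻¹ * ‖v p‖ := calc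
    ‖v p‖ = ‖w + B (p - q)‖ := by simp [w]
    _ ≤ ‖w‖ + ‖B (p - q)‖ := norm_add_le _ _
    _ ≤ 2⁻¹ * ‖v p‖ := by linarith
  exact norm_eq_zero.1 (by linarith [norm_nonneg (v p)])

theorem eventually_apply_eq_of_add_smul_sub_mem {f : E → E} {B : E →L[ℝ] E} {x : E}
    (hv : HasStrictFDerivAt (fun p => f p - p) B x) (hx : f x = x) {K : Set E}
    (hKfix : ∀ᶠ q in 𝓝 x, q ∈ K → f q = q) {ℓ : StrongDual ℝ E} (hℓ : ‖ℓ‖ ≤ 1)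
    (hB : ∀ z, ‖B z‖ ≤ |ℓ (B z)|) :
    ∀ᶠ p in 𝓝 x, ℓ (f p - p) = 0 → ∀ t ∈ Icc (0 : ℝ) 1, p + t • (f p - p) ∈ K → f p = p := by
  have hf : ContinuousAt f x := by simpa using hv.continuousAt.fun_add continuousAt_id
  obtain ⟨s, hs, happrox⟩ := hv.approximates_deriv_on_nhds (c := 4⁻¹) (Or.inr (by norm_num))
  filter_upwards [hs, eventually_forall_add_smul_sub_mem hf hx (inter_mem hs hKfix)]
    with p hp htrack hℓp t ht hK
  exact sub_eq_zero.1 (happrox.eq_zero_of_map_add_smul_eq_zero hℓ hB hp hℓp ht (htrack t ht).1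
    (sub_eq_zero.2 ((htrack t ht).2 hK)))

theorem eventually_eq_of_apply_eq_self [FiniteDimensional ℝ E] {f : E → E} {B : E →L[ℝ] E}
    {x : E} (hv : HasFDerivAt (fun p => f p - p) B x) (hB : Injective B) :
    ∀ᶠ y in 𝓝 x, f y = y → y = x := by
  obtain ⟨C, -, hC⟩ := LinearMap.exists_antilipschitzWith (B : E →ₗ[ℝ] E)
    (LinearMap.ker_eq_bot.2 hB)
  filter_upwards [eventually_nhdsWithin_iff.1 (hv.eventually_ne (c := 0) ⟨C, hC⟩)]
    with y hy hfy
  by_contra hyx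
  exact hy hyx (sub_eq_zero.2 hfy)

theorem fixedPointsJoinableWithin_zeroSet [CompleteSpace E] {F : Type*} [NormedAddCommGroup F]
    [NormedSpace ℝ F] [FiniteDimensional ℝ F] {f : E → E} {x : E} (hx : f x = x) {φ : E → F}
    {φ' : E →L[ℝ] F} (hφ : HasStrictFDerivAt φ φ' x) (hφ' : φ'.range = ⊤)
    (hfix : ∀ y, f y = y → φ y = 0) : FixedPointsJoinableWithin f x {p | φ p = 0} :=
  (fixedPointsJoinableWithin_preimage hx (hφ.implicitToOpenPartialHomeomorph φ φ' hφ')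
    (hφ.mem_implicitToOpenPartialHomeomorph_source hφ')
    (LinearMap.ker (LinearMap.fst ℝ F φ'.ker)).convex
    fun y hy => by simpa using hfix y hy).mono fun p hp => by simpa using hp

end NormedSpace

section InnerProductSpace

variable {E : Type*} [NormedAddCommGroup E] [InnerProductSpace ℝ E]

theorem exists_norm_eq_one_forall_eq_inner_smul (hE : Module.finrank ℝ E = 2) {B : E →L[ℝ] E}
    (hB : ¬Injective B) (hB0 : B ≠ 0) : ∃ e : E, ‖e‖ = 1 ∧ ∀ z, B z = ⟪e, B z⟫ • e := by
  have : FiniteDimensional ℝ E := Module.finite_of_finrank_eq_succ hE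
  have hker : 1 ≤ Module.finrank ℝ (LinearMap.ker (B : E →ₗ[ℝ] E)) :=
    Submodule.one_le_finrank_iff.2 (by simpa [LinearMap.ker_eq_bot] using hB)
  have hrange := LinearMap.finrank_range_add_finrank_ker (B : E →ₗ[ℝ] E)
  obtain ⟨⟨b, _⟩, hb⟩ := finrank_le_one_iff.1
    (show Module.finrank ℝ (LinearMap.range (B : E →ₗ[ℝ] E)) ≤ 1 by omega)
  have hBb : ∀ z, ∃ c : ℝ, B z = c • b := fun z => by
    obtain ⟨c, hc⟩ := hb ⟨B z, z, rfl⟩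
    exact ⟨c, (congrArg Subtype.val hc).symm⟩
  have hb0 : b ≠ 0 := by
    rintro rfl
    exact hB0 (ContinuousLinearMap.ext fun z => by simpa using hBb z)
  refine ⟨‖b‖⁻¹ • b, by simp [norm_smul, hb0], fun z => ?_⟩
  obtain ⟨c, hc⟩ := hBb z
  rw [hc, real_inner_smul_left, real_inner_smul_right, real_inner_self_eq_norm_sq, smul_smul]
  congr 1
  field_simp

theorem hasLocallyConstantNielsenAt_of_forall_eq_inner_smul [CompleteSpace E] {f : E → E}
    (hf : Continuous f) {B : E →L[ℝ] E} {x : E} (hv : HasStrictFDerivAt (fun p => f p - p) B x)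
    (hx : f x = x) {K : Set E} (hKfix : ∀ᶠ q in 𝓝 x, q ∈ K → f q = q) {e : E} (he : ‖e‖ = 1)
    (hBe : ∀ z, B z = ⟪e, B z⟫ • e) (hB0 : B ≠ 0) : HasLocallyConstantNielsenAt f K x := by
  have hφ' : ((innerSL ℝ e).comp B).range = ⊤ := by
    refine Module.Dual.range_eq_top_of_ne_zero fun h => hB0 (ContinuousLinearMap.ext fun z => ?_)
    rw [hBe z, show ⟪e, B z⟫ = 0 from LinearMap.congr_fun h z, zero_smul, zero_apply]
  have hBnorm : ∀ z, ‖B z‖ = |⟪e, B z⟫| := fun z => by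
    conv_lhs => rw [hBe z]
    simp [norm_smul, he]
  exact hasLocallyConstantNielsenAt_of_joinableWithin hf hx
    (eventually_apply_eq_of_add_smul_sub_mem hv hx hKfix (by simp [he]) fun z => (hBnorm z).le)
    (fixedPointsJoinableWithin_zeroSet hx ((innerSL ℝ e).hasStrictFDerivAt.comp x hv) hφ'
      fun y hy => by simp [hy])

end InnerProductSpace

theorem stmt_10_general (f : EuclideanSpace ℝ (Fin 2) → EuclideanSpace ℝ (Fin 2))
    (hdiff : ContDiff ℝ 1 f)
    (K : Set (EuclideanSpace ℝ (Fin 2))) (hKcpt : IsCompact K)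
    (hKopen : IsOpen ((fun y : K => (y : EuclideanSpace ℝ (Fin 2))) ⁻¹' {z | f z = z})) :
    ∀ x, f x = x → ∀ N ∈ nhds x,
      ∃ U V : Set (EuclideanSpace ℝ (Fin 2)),
        IsOpen U ∧ IsOpen V ∧ x ∈ U ∧ U ⊆ V ∧ V ⊆ N ∧
        ∀ y ∈ U, f y = y →
          ∃ α : ℝ → EuclideanSpace ℝ (Fin 2),
            IsPathFromTo α x y ∧ α '' Set.Icc 0 1 ⊆ U ∧
            HomotopyRelIn K V x y α (f ∘ α) := by
  intro x hx
  have hKfix := eventually_mem_imp_apply_eq_of_isOpen_fixedPoints hKcpt.isClosed hKopen hx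
  have hv : HasStrictFDerivAt (fun p => f p - p) (fderiv ℝ f x - ContinuousLinearMap.id ℝ _) x :=
    (hdiff.hasStrictFDerivAt one_ne_zero).sub (hasStrictFDerivAt_id x)
  set B := fderiv ℝ f x - ContinuousLinearMap.id ℝ _
  by_cases hBinj : Injective B
  · exact hasLocallyConstantNielsenAt_of_joinableWithin hdiff.continuous hx
      (.of_forall fun p hp _ _ _ => by rwa [mem_singleton_iff.1 hp])
      (fixedPointsJoinableWithin_singleton (eventually_eq_of_apply_eq_self hv.hasFDerivAt hBinj))
  by_cases hB0 : B = 0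
  · refine hasLocallyConstantNielsenAt_of_joinableWithin hdiff.continuous hx ?_
      (fixedPointsJoinableWithin_preimage hx (OpenPartialHomeomorph.refl _) (mem_univ x)
        convex_univ fun _ _ => mem_univ _)
    -- with `ℓ = 0` the side condition `ℓ (f p - p) = 0` is vacuous
    filter_upwards [eventually_apply_eq_of_add_smul_sub_mem hv hx hKfix (ℓ := 0) (by simp)
      (by simp [hB0])] with p hp _ using hp (by simp)
  obtain ⟨e, he, hBe⟩ := exists_norm_eq_one_forall_eq_inner_smul finrank_euclideanSpace_fin
    hBinj hB0
  exact hasLocallyConstantNielsenAt_of_forall_eq_inner_smul hdiff.continuous hv hx hKfix he hBe hB0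

/-- A `C¹` diffeomorphism `f` of the plane with everywhere positive Jacobian
has locally constant Nielsen behavior rel any compact invariant set `K` such that
`Fix f ∩ K` is open in `K`. -/
theorem stmt_10 (f : EuclideanSpace ℝ (Fin 2) → EuclideanSpace ℝ (Fin 2))
    (hdiff : ContDiff ℝ 1 f)
    (hinv : ∃ g : EuclideanSpace ℝ (Fin 2) → EuclideanSpace ℝ (Fin 2),
      ContDiff ℝ 1 g ∧ Function.LeftInverse g f ∧ Function.RightInverse g f)
    (hjac : ∀ z, 0 < (fderiv ℝ f z).det)
    (K : Set (EuclideanSpace ℝ (Fin 2))) (hKcpt : IsCompact K) (hKinv : f '' K = K)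
    (hKopen : IsOpen ((fun y : K => (y : EuclideanSpace ℝ (Fin 2))) ⁻¹' {z | f z = z})) :
    ∀ x, f x = x → ∀ N ∈ nhds x,
      ∃ U V : Set (EuclideanSpace ℝ (Fin 2)),
        IsOpen U ∧ IsOpen V ∧ x ∈ U ∧ U ⊆ V ∧ V ⊆ N ∧
        ∀ y ∈ U, f y = y →
          ∃ α : ℝ → EuclideanSpace ℝ (Fin 2),
            IsPathFromTo α x y ∧ α '' Set.Icc 0 1 ⊆ U ∧
            HomotopyRelIn K V x y α (f ∘ α) :=
  stmt_10_general f hdiff K hKcpt hKopen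
end

section
/- Let G be a group acting on a set S and let i : S × S → ℕ be a G-invariant function, i.e. i(g·γ, g·δ) = i(γ, δ) for all g ∈ G and γ, δ ∈ S. For α ∈ G set Per(α) = {γ ∈ S : there exists n ≥ 1 with α^n·γ = γ} and Per₀(α) = {γ ∈ Per(α) : i(γ, δ) = 0 for all δ ∈ Per(α)}. Let A ⊆ G be a set of pairwise commuting elements, and set Per(A) = ⋂_{α ∈ A} Per(α) and Per₀(A) = {γ ∈ Per(A) : i(γ, δ) = 0 for all δ ∈ Per(A)}. If Per₀(α) is finite for every α ∈ A, then Per₀(α) ⊆ Per₀(A) for every α ∈ A; in particular ⋃_{α ∈ A} Per₀(α) ⊆ Per₀(A), and this union is mapped onto itself by every β ∈ A. -/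
/-- The set of `α`-periodic points of the action of `G` on `S`. -/
def Per {G : Type*} (S : Type*) [Group G] [MulAction G S] (α : G) : Set S :=
  {γ | ∃ n ≥ 1, α ^ n • γ = γ}

/-- The `α`-periodic points having zero `i`-intersection with every `α`-periodic point. -/
def Per₀ {G S : Type*} [Group G] [MulAction G S] (i : S × S → ℕ) (α : G) : Set S :=
  {γ ∈ Per S α | ∀ δ ∈ Per S α, i (γ, δ) = 0}

/-- The points periodic under every element of `A`. -/
def PerSet {G : Type*} (S : Type*) [Group G] [MulAction G S] (A : Set G) : Set S :=
  ⋂ α ∈ A, Per S α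

/-- The `A`-periodic points having zero `i`-intersection with every `A`-periodic point. -/
def Per₀Set {G S : Type*} [Group G] [MulAction G S] (i : S × S → ℕ) (A : Set G) : Set S :=
  {γ ∈ PerSet S A | ∀ δ ∈ PerSet S A, i (γ, δ) = 0}

/-! By invariance of `i`, every `β` commuting with `α` permutes `Per₀ α`. If that set is finite,
`β` acts on it as a permutation of finite order, so its points are `β`-periodic. For a commuting
family `A` this puts each `Per₀ α` inside `Per A`, and since `Per A ⊆ Per α` the vanishing of `i`
against `Per α` gives vanishing against `Per A`. -/

section

variable {G S : Type*} [Group G] [MulAction G S]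

lemma PerSet_subset_Per {A : Set G} {α : G} (hα : α ∈ A) : PerSet S A ⊆ Per S α :=
  Set.biInter_subset_of_mem hα

lemma mem_Per_of_mapsTo {β : G} {s : Set S} (hs : s.Finite)
    (hmaps : Set.MapsTo (β • ·) s s) {γ : S} (hγ : γ ∈ s) : γ ∈ Per S β := by
  have := hs.to_subtype
  have hinj : Function.Injective hmaps.restrict :=
    hmaps.restrict_inj.mpr (MulAction.injective β).injOn
  obtain ⟨n, hn, hper⟩ := hinj.mem_periodicPts ⟨γ, hγ⟩
  exact ⟨n, hn, MulAction.isPeriodicPt_smul_iff.mp (hper.map (g := Subtype.val) fun _ => rfl)⟩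

lemma smul_mem_Per {α β : G} (h : Commute α β) {γ : S} (hγ : γ ∈ Per S α) :
    β • γ ∈ Per S α := by
  obtain ⟨n, hn, hfix⟩ := hγ
  exact ⟨n, hn, by rw [smul_smul, (h.pow_left n).eq, mul_smul, hfix]⟩

variable {i : S × S → ℕ}

lemma smul_mem_Per₀ (hi : ∀ (g : G) (γ δ : S), i (g • γ, g • δ) = i (γ, δ)) {α β : G}
    (h : Commute α β) {γ : S} (hγ : γ ∈ Per₀ i α) : β • γ ∈ Per₀ i α := by
  refine ⟨smul_mem_Per h hγ.1, fun δ hδ => ?_⟩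
  calc i (β • γ, δ) = i (β • γ, β • β⁻¹ • δ) := by rw [smul_inv_smul]
    _ = i (γ, β⁻¹ • δ) := hi β γ _
    _ = 0 := hγ.2 _ (smul_mem_Per h.inv_right hδ)

lemma image_smul_Per₀ (hi : ∀ (g : G) (γ δ : S), i (g • γ, g • δ) = i (γ, δ)) {α β : G}
    (h : Commute α β) : (β • ·) '' Per₀ i α = Per₀ i α := by
  refine Set.Subset.antisymm ?_ fun γ hγ => ?_
  · exact Set.image_subset_iff.mpr fun _ hγ => smul_mem_Per₀ hi h hγ
  · exact ⟨β⁻¹ • γ, smul_mem_Per₀ hi h.inv_right hγ, smul_inv_smul β γ⟩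

lemma Per₀_subset_Per (hi : ∀ (g : G) (γ δ : S), i (g • γ, g • δ) = i (γ, δ)) {α β : G}
    (h : Commute α β) (hfin : (Per₀ i α).Finite) : Per₀ i α ⊆ Per S β :=
  fun _ => mem_Per_of_mapsTo hfin fun _ hδ => smul_mem_Per₀ hi h hδ

lemma Per₀_subset_Per₀Set (hi : ∀ (g : G) (γ δ : S), i (g • γ, g • δ) = i (γ, δ))
    {A : Set G} {α : G} (hα : α ∈ A) (hcomm : ∀ β ∈ A, Commute α β)
    (hfin : (Per₀ i α).Finite) : Per₀ i α ⊆ Per₀Set i A := fun _ hγ =>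
  ⟨Set.mem_iInter₂.mpr fun β hβ => Per₀_subset_Per hi (hcomm β hβ) hfin hγ,
    fun δ hδ => hγ.2 δ (PerSet_subset_Per hα hδ)⟩

end

/-- If `A` is a set of pairwise commuting elements with each `Per₀ α` finite,
then `Per₀ α ⊆ Per₀ A` for every `α ∈ A`; in particular `⋃_{α ∈ A} Per₀ α ⊆ Per₀ A`, and
this union is mapped onto itself by every `β ∈ A`. -/
theorem stmt_13 {G S : Type*} [Group G] [MulAction G S] (i : S × S → ℕ)
    (hi : ∀ (g : G) (γ δ : S), i (g • γ, g • δ) = i (γ, δ))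
    (A : Set G) (hcomm : ∀ α ∈ A, ∀ β ∈ A, α * β = β * α)
    (hfin : ∀ α ∈ A, (Per₀ i α).Finite) :
    (∀ α ∈ A, Per₀ i α ⊆ Per₀Set i A) ∧
    (⋃ α ∈ A, Per₀ i α) ⊆ Per₀Set i A ∧
    (∀ β ∈ A, (fun γ : S => β • γ) '' (⋃ α ∈ A, Per₀ i α) = ⋃ α ∈ A, Per₀ i α) := by
  have hsub : ∀ α ∈ A, Per₀ i α ⊆ Per₀Set i A := fun α hα =>
    Per₀_subset_Per₀Set hi hα (hcomm α hα) (hfin α hα)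
  refine ⟨hsub, Set.iUnion₂_subset hsub, fun β hβ => ?_⟩
  rw [Set.image_iUnion₂]
  exact Set.iUnion₂_congr fun α hα => image_smul_Per₀ hi (hcomm α hα β hβ)
end
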